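/- arXiv:2107.13324 — 5 statements merged into one kernel-verified Lean document; each statement's English description precedes it below -/
import Mathlib

section
/- Let n be an even integer with n ≥ 2. Let A and B be linear subspaces of 𝔽₂ⁿ, each of dimension n/2, and let s' ∈ 𝔽₂ⁿ and t ∈ 𝔽₂ⁿ. Then the operator norm satisfies ‖(2^{-n/2} Σ_{s ∈ 𝔽₂ⁿ} |A_{s,s'}⟩⟨A_{s,s'}|) · (2^{-n/2} Σ_{t' ∈ 𝔽₂ⁿ} |B_{t,t'}⟩⟨B_{t,t'}|)‖ ≤ √(2^{dim(A∩B) − n/2}). -/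
open scoped Matrix.Norms.L2Operator

/-- The sign `(-1)^b` for `b ∈ 𝔽₂`. -/
noncomputable def sgn (b : ZMod 2) : ℂ := if b = 0 then 1 else -1

/-- Dot product on `𝔽₂ⁿ`. -/
def dot {n : ℕ} (x y : Fin n → ZMod 2) : ZMod 2 := ∑ i, x i * y i

open Classical in
/-- The coset state `|A_{s,s'}⟩ = |A|^{-1/2} Σ_{u∈A} (-1)^{u·s'} e_{u+s}`, written
coefficient-wise. -/
noncomputable def cosetState {n : ℕ} (A : Submodule (ZMod 2) (Fin n → ZMod 2))
    (s s' : Fin n → ZMod 2) : (Fin n → ZMod 2) → ℂ :=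
  fun v => if v + s ∈ A then sgn (dot (v + s) s') / Real.sqrt (Nat.card A) else 0

/-- The rank-one projector `|ψ⟩⟨ψ|`. -/
noncomputable def outer {ι : Type*} (ψ : ι → ℂ) : Matrix ι ι ℂ := Matrix.vecMulVec ψ (star ψ)

set_option maxHeartbeats 1000000

lemma sgn_add (a b : ZMod 2) : sgn (a + b) = sgn a * sgn b := by
  rcases (by decide : ∀ x : ZMod 2, x = 0 ∨ x = 1) a with rfl | rfl <;>
    rcases (by decide : ∀ x : ZMod 2, x = 0 ∨ x = 1) b with rfl | rfl <;>
    simp [sgn, show (1 : ZMod 2) + 1 = 0 from rfl]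

lemma star_sgn (b : ZMod 2) : (starRingEnd ℂ) (sgn b) = sgn b := by
  unfold sgn; split <;> simp

lemma norm_sgn (b : ZMod 2) : ‖sgn b‖ = 1 := by
  unfold sgn; split <;> simp

lemma dot_add_left {n : ℕ} (x y z : Fin n → ZMod 2) :
    dot (x + y) z = dot x z + dot y z := by
  simp [dot, add_mul, Finset.sum_add_distrib]

lemma dot_add_right {n : ℕ} (x y z : Fin n → ZMod 2) :
    dot x (y + z) = dot x y + dot x z := by
  simp [dot, mul_add, Finset.sum_add_distrib]

lemma add_self_F2 {n : ℕ} (x : Fin n → ZMod 2) : x + x = 0 := by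
  funext i
  show x i + x i = 0
  rw [← two_mul]
  have : (2 : ZMod 2) = 0 := by decide
  rw [this, zero_mul]

lemma char_sum {n : ℕ} (c : Fin n → ZMod 2) (hc : c ≠ 0) :
    ∑ t' : Fin n → ZMod 2, sgn (dot c t') = 0 := by
  obtain ⟨i, hi⟩ : ∃ i, c i ≠ 0 := by
    by_contra h; push_neg at h; exact hc (funext h)
  have hci : c i = 1 := by
    generalize c i = a at hi ⊢
    revert hi; revert a; decide
  have hflip : ∀ t' : Fin n → ZMod 2,
      sgn (dot c (t' + Pi.single i 1)) = - sgn (dot c t') := by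
    intro t'
    have hd : dot c (t' + Pi.single i 1) = dot c t' + 1 := by
      rw [dot_add_right]
      congr 1
      unfold dot
      rw [Finset.sum_eq_single i (fun j _ hj => by simp [Pi.single_apply, hj]) (by simp)]
      simp [hci]
    rw [hd]
    have h1 : ∀ a : ZMod 2, sgn (a + 1) = - sgn a := by
      intro a; rcases (by decide : ∀ x : ZMod 2, x = 0 ∨ x = 1) a with rfl | rfl <;> simp [sgn, show (1 : ZMod 2) + 1 = 0 from rfl]
    exact h1 _
  have heq : ∑ t' : Fin n → ZMod 2, sgn (dot c (t' + Pi.single i 1)) =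
      ∑ t' : Fin n → ZMod 2, sgn (dot c t') :=
    Fintype.sum_equiv (Equiv.addRight (Pi.single i 1)) _ _ (fun t' => rfl)
  rw [Finset.sum_congr rfl (fun t' _ => hflip t'), Finset.sum_neg_distrib] at heq
  linear_combination (-1/2 : ℂ) * heq



lemma schur_test {ι : Type*} [Fintype ι] [DecidableEq ι] (M : Matrix ι ι ℂ) {R C : ℝ}
    (hR0 : 0 ≤ R) (hC0 : 0 ≤ C)
    (hR : ∀ v, ∑ w, ‖M v w‖ ≤ R) (hC : ∀ w, ∑ v, ‖M v w‖ ≤ C) :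
    ‖M‖ ≤ Real.sqrt (R * C) := by
  rw [Matrix.l2_opNorm_def]
  refine ContinuousLinearMap.opNorm_le_bound _ (Real.sqrt_nonneg _) fun x => ?_
  have hy : ∀ v, ((Matrix.toEuclideanLin.trans LinearMap.toContinuousLinearMap) M) x v
      = ∑ w, M v w * x w := by
    intro v
    simp [Matrix.toEuclideanLin_apply, Matrix.mulVec, dotProduct]
  rw [EuclideanSpace.norm_eq, EuclideanSpace.norm_eq]
  simp only [hy]
  have key : ∀ v, ‖∑ w, M v w * x w‖ ^ 2 ≤ R * ∑ w, ‖M v w‖ * ‖x w‖ ^ 2 := by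
    intro v
    have h1 : ‖∑ w, M v w * x w‖ ≤ ∑ w, ‖M v w‖ * ‖x w‖ :=
      (norm_sum_le _ _).trans (le_of_eq (Finset.sum_congr rfl fun w _ => norm_mul _ _))
    have h2 : (∑ w, ‖M v w‖ * ‖x w‖) ^ 2
        ≤ (∑ w, ‖M v w‖) * (∑ w, ‖M v w‖ * ‖x w‖ ^ 2) := by
      have hcs := Finset.sum_mul_sq_le_sq_mul_sq Finset.univ
        (fun w => Real.sqrt ‖M v w‖) (fun w => Real.sqrt ‖M v w‖ * ‖x w‖)
      calc (∑ w, ‖M v w‖ * ‖x w‖) ^ 2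
          = (∑ w, Real.sqrt ‖M v w‖ * (Real.sqrt ‖M v w‖ * ‖x w‖)) ^ 2 := by
            congr 1
            refine Finset.sum_congr rfl fun w _ => ?_
            rw [← mul_assoc, Real.mul_self_sqrt (norm_nonneg _)]
        _ ≤ (∑ w, Real.sqrt ‖M v w‖ ^ 2) * (∑ w, (Real.sqrt ‖M v w‖ * ‖x w‖) ^ 2) := hcs
        _ = (∑ w, ‖M v w‖) * (∑ w, ‖M v w‖ * ‖x w‖ ^ 2) := by
            congr 1
            · exact Finset.sum_congr rfl fun w _ => Real.sq_sqrt (norm_nonneg _)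
            · refine Finset.sum_congr rfl fun w _ => ?_
              rw [mul_pow, Real.sq_sqrt (norm_nonneg _)]
    calc ‖∑ w, M v w * x w‖ ^ 2
        ≤ (∑ w, ‖M v w‖ * ‖x w‖) ^ 2 := pow_le_pow_left₀ (norm_nonneg _) h1 2
      _ ≤ (∑ w, ‖M v w‖) * (∑ w, ‖M v w‖ * ‖x w‖ ^ 2) := h2
      _ ≤ R * ∑ w, ‖M v w‖ * ‖x w‖ ^ 2 :=
          mul_le_mul_of_nonneg_right (hR v)
            (Finset.sum_nonneg fun w _ => by positivity)
  have main : (∑ v, ‖∑ w, M v w * x w‖ ^ 2) ≤ R * C * ∑ w, ‖x w‖ ^ 2 := by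
    calc (∑ v, ‖∑ w, M v w * x w‖ ^ 2)
        ≤ ∑ v, R * ∑ w, ‖M v w‖ * ‖x w‖ ^ 2 := Finset.sum_le_sum fun v _ => key v
      _ = R * ∑ w, (∑ v, ‖M v w‖) * ‖x w‖ ^ 2 := by
          rw [← Finset.mul_sum, Finset.sum_comm]
          congr 1
          exact Finset.sum_congr rfl fun w _ => (Finset.sum_mul _ _ _).symm
      _ ≤ R * ∑ w, C * ‖x w‖ ^ 2 :=
          mul_le_mul_of_nonneg_left (Finset.sum_le_sum fun w _ =>
            mul_le_mul_of_nonneg_right (hC w) (by positivity)) hR0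
      _ = R * C * ∑ w, ‖x w‖ ^ 2 := by rw [← Finset.mul_sum, mul_assoc]
  calc Real.sqrt (∑ v, ‖∑ w, M v w * x w‖ ^ 2)
      ≤ Real.sqrt (R * C * ∑ w, ‖x w‖ ^ 2) := Real.sqrt_le_sqrt main
    _ = Real.sqrt (R * C) * Real.sqrt (∑ w, ‖x w‖ ^ 2) :=
        Real.sqrt_mul (by positivity) _

lemma dot_zero_left {n : ℕ} (z : Fin n → ZMod 2) : dot 0 z = 0 := by
  simp [dot]

lemma star_cosetState {n : ℕ} (A : Submodule (ZMod 2) (Fin n → ZMod 2))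
    (s s' v : Fin n → ZMod 2) :
    star (cosetState A s s' v) = cosetState A s s' v := by
  unfold cosetState sgn
  split
  · split <;> simp [star_div₀]
  · simp

open Classical in
lemma count_col {n : ℕ} (A : Submodule (ZMod 2) (Fin n → ZMod 2)) (w : Fin n → ZMod 2) :
    (Finset.univ.filter fun v => v + w ∈ A).card = Nat.card A := by
  classical
  have himg : (Finset.univ.filter fun v => v + w ∈ A)
      = Finset.univ.image (fun a : A => (a : Fin n → ZMod 2) + w) := by
    ext v
    simp only [Finset.mem_filter, Finset.mem_image, Finset.mem_univ, true_and]
    constructor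
    · intro hv
      refine ⟨⟨v + w, hv⟩, ?_⟩
      show v + w + w = v
      rw [add_assoc, add_self_F2, add_zero]
    · rintro ⟨a, rfl⟩
      show (a : Fin n → ZMod 2) + w + w ∈ A
      rw [add_assoc, add_self_F2, add_zero]
      exact a.2
  rw [himg, Finset.card_image_of_injective _ (fun a b hab => Subtype.ext (add_right_cancel hab)),
    Finset.card_univ, Nat.card_eq_fintype_card]

open Classical in
lemma count_row {n : ℕ} (A B : Submodule (ZMod 2) (Fin n → ZMod 2)) (v t : Fin n → ZMod 2) :
    (Finset.univ.filter fun w => v + w ∈ A ∧ w + t ∈ B).card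
      ≤ Nat.card (A ⊓ B : Submodule (ZMod 2) (Fin n → ZMod 2)) := by
  classical
  rcases (Finset.univ.filter fun w => v + w ∈ A ∧ w + t ∈ B).eq_empty_or_nonempty with h | h
  · simp [h]
  · obtain ⟨w₀, hw₀⟩ := h
    rw [Finset.mem_filter] at hw₀
    obtain ⟨-, h1, h2⟩ := hw₀
    have hle : (Finset.univ.filter fun w => v + w ∈ A ∧ w + t ∈ B).card ≤
        (Finset.univ.image
          (fun a : (A ⊓ B : Submodule (ZMod 2) (Fin n → ZMod 2)) => (a : Fin n → ZMod 2))).card := by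
      apply Finset.card_le_card_of_injOn (fun w => w + w₀)
      · intro w hw
        rw [Finset.mem_coe, Finset.mem_filter] at hw
        obtain ⟨-, g1, g2⟩ := hw
        have hmem : w + w₀ ∈ (A ⊓ B : Submodule (ZMod 2) (Fin n → ZMod 2)) := by
          refine Submodule.mem_inf.mpr ⟨?_, ?_⟩
          · have hadd := A.add_mem g1 h1
            have e : (v + w) + (v + w₀) = w + w₀ := by
              have e2 : (v + w) + (v + w₀) = (v + v) + (w + w₀) := by abel
              rw [e2, add_self_F2, zero_add]
            rwa [e] at hadd
          · have hadd := B.add_mem g2 h2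
            have e : (w + t) + (w₀ + t) = w + w₀ := by
              have e2 : (w + t) + (w₀ + t) = (w + w₀) + (t + t) := by abel
              rw [e2, add_self_F2, add_zero]
            rwa [e] at hadd
        exact Finset.mem_image.mpr ⟨⟨w + w₀, hmem⟩, Finset.mem_univ _, rfl⟩
      · intro a _ b _ hab
        exact add_right_cancel hab
    rw [Finset.card_image_of_injective _ Subtype.coe_injective, Finset.card_univ] at hle
    rw [Nat.card_eq_fintype_card]
    exact hle

/-- Lemma 2 of the paper: the overlap bound
`‖(2^{-n/2} Σ_s |A_{s,s'}⟩⟨A_{s,s'}|)(2^{-n/2} Σ_{t'} |B_{t,t'}⟩⟨B_{t,t'}|)‖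
  ≤ √(2^{dim(A∩B) − n/2})`. -/
theorem coset_overlap_bound (n : ℕ) (hn : 2 ≤ n) (hne : Even n)
    (A B : Submodule (ZMod 2) (Fin n → ZMod 2))
    (hA : Module.finrank (ZMod 2) A = n / 2) (hB : Module.finrank (ZMod 2) B = n / 2)
    (s' t : Fin n → ZMod 2) :
    ‖(((2 : ℂ) ^ (n / 2))⁻¹ • ∑ s : Fin n → ZMod 2, outer (cosetState A s s')) *
      (((2 : ℂ) ^ (n / 2))⁻¹ • ∑ t' : Fin n → ZMod 2, outer (cosetState B t t'))‖ ≤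
      Real.sqrt ((2 : ℝ) ^
        ((Module.finrank (ZMod 2) (A ⊓ B : Submodule (ZMod 2) (Fin n → ZMod 2)) : ℝ)
          - (n : ℝ) / 2)) := by
  classical
  obtain ⟨m, rfl⟩ := hne
  have hm2 : (m + m) / 2 = m := by omega
  rw [hm2] at hA hB ⊢
  have h2C : ((2 : ℂ) ^ m) ≠ 0 := pow_ne_zero _ two_ne_zero
  have cardA : Nat.card A = 2 ^ m := by
    rw [Nat.card_eq_fintype_card, Module.card_eq_pow_finrank (K := ZMod 2), ZMod.card, hA]
  have cardB : Nat.card B = 2 ^ m := by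
    rw [Nat.card_eq_fintype_card, Module.card_eq_pow_finrank (K := ZMod 2), ZMod.card, hB]
  set dI := Module.finrank (ZMod 2) (A ⊓ B : Submodule (ZMod 2) (Fin (m + m) → ZMod 2)) with hdI
  have cardI : Nat.card (A ⊓ B : Submodule (ZMod 2) (Fin (m + m) → ZMod 2)) = 2 ^ dI := by
    rw [Nat.card_eq_fintype_card, Module.card_eq_pow_finrank (K := ZMod 2), ZMod.card, hdI]
  -- square root cancellation
  have hccA : (↑(Real.sqrt (Nat.card A)) : ℂ) * ↑(Real.sqrt (Nat.card A)) = (2 : ℂ) ^ m := by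
    rw [← Complex.ofReal_mul, Real.mul_self_sqrt (by positivity), cardA]
    push_cast
    ring
  have hccB : (↑(Real.sqrt (Nat.card B)) : ℂ) * ↑(Real.sqrt (Nat.card B)) = (2 : ℂ) ^ m := by
    rw [← Complex.ofReal_mul, Real.mul_self_sqrt (by positivity), cardB]
    push_cast
    ring
  -- entries of the A-sum
  have hP : ∀ v w : Fin (m + m) → ZMod 2,
      (∑ s : Fin (m + m) → ZMod 2, outer (cosetState A s s')) v w
      = if v + w ∈ A then sgn (dot (v + w) s') else 0 := by
    intro v w
    rw [Matrix.sum_apply]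
    have hterm : ∀ s : Fin (m + m) → ZMod 2, outer (cosetState A s s') v w
        = if v + w ∈ A ∧ v + s ∈ A then sgn (dot (v + w) s') / ((2 : ℂ) ^ m) else 0 := by
      intro s
      rw [outer, Matrix.vecMulVec_apply, Pi.star_apply, star_cosetState]
      unfold cosetState
      by_cases h1 : v + s ∈ A
      · by_cases hvw : v + w ∈ A
        · have h2 : w + s ∈ A := by
            have hadd := A.add_mem hvw h1
            have e : (v + w) + (v + s) = w + s := by
              have e2 : (v + w) + (v + s) = (v + v) + (w + s) := by abel
              rw [e2, add_self_F2, zero_add]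
            rwa [e] at hadd
          have e3 : (v + s) + (w + s) = v + w := by
            have e2 : (v + s) + (w + s) = (s + s) + (v + w) := by abel
            rw [e2, add_self_F2, zero_add]
          rw [if_pos h1, if_pos h2, if_pos ⟨hvw, h1⟩, div_mul_div_comm, hccA, ← sgn_add,
            ← dot_add_left, e3]
        · have h2 : w + s ∉ A := by
            intro h2
            apply hvw
            have hadd := A.add_mem h1 h2
            have e : (v + s) + (w + s) = v + w := by
              have e2 : (v + s) + (w + s) = (s + s) + (v + w) := by abel
              rw [e2, add_self_F2, zero_add]
            rwa [e] at hadd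
          rw [if_pos h1, if_neg h2, mul_zero, if_neg (fun hh => hvw hh.1)]
      · rw [if_neg h1, zero_mul, if_neg (fun hh => h1 hh.2)]
    rw [Finset.sum_congr rfl fun s _ => hterm s]
    by_cases hvw : v + w ∈ A
    · rw [if_pos hvw]
      have hsimp : ∀ s, (if v + w ∈ A ∧ v + s ∈ A then sgn (dot (v + w) s') / ((2 : ℂ) ^ m) else 0)
          = if v + s ∈ A then sgn (dot (v + w) s') / ((2 : ℂ) ^ m) else 0 := by
        intro s
        by_cases hs : v + s ∈ A
        · rw [if_pos ⟨hvw, hs⟩, if_pos hs]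
        · rw [if_neg (fun hh => hs hh.2), if_neg hs]
      rw [Finset.sum_congr rfl fun s _ => hsimp s, ← Finset.sum_filter]
      have hpred : (Finset.univ.filter fun s => v + s ∈ A)
          = (Finset.univ.filter fun s => s + v ∈ A) := by
        apply Finset.filter_congr
        intro s _
        exact iff_of_eq (congrArg (· ∈ A) (add_comm v s))
      rw [hpred, Finset.sum_const, count_col, cardA, nsmul_eq_mul]
      push_cast
      rw [mul_div_cancel₀ _ h2C]
    · rw [if_neg hvw, Finset.sum_congr rfl fun s _ => if_neg (fun hh => hvw hh.1)]
      exact Finset.sum_const_zero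
  -- entries of the B-sum
  have hQ : ∀ x w : Fin (m + m) → ZMod 2,
      (∑ t' : Fin (m + m) → ZMod 2, outer (cosetState B t t')) x w
      = if x = w ∧ x + t ∈ B then (2 : ℂ) ^ m else 0 := by
    intro x w
    rw [Matrix.sum_apply]
    have hterm : ∀ t' : Fin (m + m) → ZMod 2, outer (cosetState B t t') x w
        = if x + t ∈ B ∧ w + t ∈ B then sgn (dot (x + w) t') / ((2 : ℂ) ^ m) else 0 := by
      intro t'
      rw [outer, Matrix.vecMulVec_apply, Pi.star_apply, star_cosetState]
      unfold cosetState
      have e3 : (x + t) + (w + t) = x + w := by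
        have e2 : (x + t) + (w + t) = (t + t) + (x + w) := by abel
        rw [e2, add_self_F2, zero_add]
      by_cases h1 : x + t ∈ B <;> by_cases h2 : w + t ∈ B
      · rw [if_pos h1, if_pos h2, if_pos ⟨h1, h2⟩, div_mul_div_comm, hccB, ← sgn_add,
          ← dot_add_left, e3]
      · rw [if_pos h1, if_neg h2, mul_zero, if_neg (fun hh => h2 hh.2)]
      · rw [if_neg h1, zero_mul, if_neg (fun hh => h1 hh.1)]
      · rw [if_neg h1, zero_mul, if_neg (fun hh => h1 hh.1)]
    rw [Finset.sum_congr rfl fun t' _ => hterm t']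
    by_cases hc : x + t ∈ B ∧ w + t ∈ B
    · rw [Finset.sum_congr rfl fun t' _ => if_pos hc, ← Finset.sum_div]
      by_cases hxw : x = w
      · subst hxw
        have hz : ∀ t' : Fin (m + m) → ZMod 2, dot (x + x) t' = 0 := by
          intro t'
          rw [add_self_F2, dot_zero_left]
        rw [if_pos ⟨rfl, hc.1⟩, Finset.sum_congr rfl fun t' _ => by rw [hz t']]
        have hone : sgn (0 : ZMod 2) = 1 := by simp [sgn]
        rw [Finset.sum_congr rfl fun t' _ => hone, Finset.sum_const, Finset.card_univ,
          nsmul_eq_mul, mul_one]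
        have hcard : Fintype.card (Fin (m + m) → ZMod 2) = 2 ^ (m + m) := by
          simp [ZMod.card]
        rw [hcard]
        push_cast
        rw [pow_add, mul_div_assoc, div_self h2C, mul_one]
      · have hne0 : x + w ≠ 0 := by
          intro h
          apply hxw
          have h2 : x + w + w = 0 + w := by rw [h]
          rwa [add_assoc, add_self_F2, add_zero, zero_add] at h2
        rw [char_sum _ hne0, zero_div, if_neg (fun hh => hxw hh.1)]
    · rw [if_neg (fun hh : x = w ∧ x + t ∈ B => hc ⟨hh.2, hh.1 ▸ hh.2⟩)]
      rw [Finset.sum_congr rfl fun t' _ => if_neg hc]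
      exact Finset.sum_const_zero
  -- the product matrix
  have key : (((2 : ℂ) ^ m)⁻¹ • ∑ s : Fin (m + m) → ZMod 2, outer (cosetState A s s')) *
      (((2 : ℂ) ^ m)⁻¹ • ∑ t' : Fin (m + m) → ZMod 2, outer (cosetState B t t')) =
      Matrix.of (fun v w => if v + w ∈ A ∧ w + t ∈ B
        then ((2 : ℂ) ^ m)⁻¹ * sgn (dot (v + w) s') else 0) := by
    ext v w
    rw [Matrix.mul_apply]
    simp only [Matrix.smul_apply, smul_eq_mul, Matrix.of_apply]
    rw [Finset.sum_congr rfl (fun x _ => by rw [hP v x, hQ x w])]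
    rw [Finset.sum_eq_single w (fun x _ hx => by
      rw [if_neg (fun hh : x = w ∧ x + t ∈ B => hx hh.1), mul_zero, mul_zero])
      (fun hw => absurd (Finset.mem_univ w) hw)]
    by_cases hvw : v + w ∈ A
    · by_cases hwt : w + t ∈ B
      · rw [if_pos hvw, if_pos ⟨rfl, hwt⟩, if_pos ⟨hvw, hwt⟩]
        field_simp
      · rw [if_neg (fun hh : w = w ∧ w + t ∈ B => hwt hh.2), mul_zero, mul_zero,
          if_neg (fun hh => hwt hh.2)]
    · rw [if_neg hvw, mul_zero, zero_mul, if_neg (fun hh => hvw hh.1)]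
  rw [key]
  -- row and column bounds
  have hR0 : (0 : ℝ) ≤ (2 : ℝ) ^ dI * ((2 : ℝ) ^ m)⁻¹ := by positivity
  have hRow : ∀ v, ∑ w, ‖(Matrix.of (fun v w => if v + w ∈ A ∧ w + t ∈ B
      then ((2 : ℂ) ^ m)⁻¹ * sgn (dot (v + w) s') else 0) : Matrix _ _ ℂ) v w‖
      ≤ (2 : ℝ) ^ dI * ((2 : ℝ) ^ m)⁻¹ := by
    intro v
    have hnorm : ∀ w, ‖(if v + w ∈ A ∧ w + t ∈ B
        then ((2 : ℂ) ^ m)⁻¹ * sgn (dot (v + w) s') else 0 : ℂ)‖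
        = if v + w ∈ A ∧ w + t ∈ B then ((2 : ℝ) ^ m)⁻¹ else 0 := by
      intro w
      split
      · rw [norm_mul, norm_sgn, mul_one, norm_inv, norm_pow]
        norm_num
      · exact norm_zero
    simp only [Matrix.of_apply]
    rw [Finset.sum_congr rfl fun w _ => hnorm w, ← Finset.sum_filter, Finset.sum_const,
      nsmul_eq_mul]
    have hcount : ((Finset.univ.filter fun w => v + w ∈ A ∧ w + t ∈ B).card : ℝ)
        ≤ (2 : ℝ) ^ dI := by
      have := (count_row A B v t).trans_eq cardI
      exact_mod_cast this
    exact mul_le_mul_of_nonneg_right hcount (by positivity)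
  have hCol : ∀ w, ∑ v, ‖(Matrix.of (fun v w => if v + w ∈ A ∧ w + t ∈ B
      then ((2 : ℂ) ^ m)⁻¹ * sgn (dot (v + w) s') else 0) : Matrix _ _ ℂ) v w‖
      ≤ (1 : ℝ) := by
    intro w
    simp only [Matrix.of_apply]
    by_cases hwt : w + t ∈ B
    · have hnorm : ∀ v, ‖(if v + w ∈ A ∧ w + t ∈ B
          then ((2 : ℂ) ^ m)⁻¹ * sgn (dot (v + w) s') else 0 : ℂ)‖
          = if v + w ∈ A then ((2 : ℝ) ^ m)⁻¹ else 0 := by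
        intro v
        by_cases hvw : v + w ∈ A
        · rw [if_pos ⟨hvw, hwt⟩, if_pos hvw, norm_mul, norm_sgn, mul_one, norm_inv, norm_pow]
          norm_num
        · rw [if_neg (fun hh => hvw hh.1), if_neg hvw, norm_zero]
      rw [Finset.sum_congr rfl fun v _ => hnorm v, ← Finset.sum_filter, Finset.sum_const,
        nsmul_eq_mul, count_col, cardA]
      push_cast
      rw [mul_inv_cancel₀ (by positivity)]
    · have hnorm : ∀ v, ‖(if v + w ∈ A ∧ w + t ∈ B
          then ((2 : ℂ) ^ m)⁻¹ * sgn (dot (v + w) s') else 0 : ℂ)‖ = 0 := by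
        intro v
        rw [if_neg (fun hh => hwt hh.2), norm_zero]
      rw [Finset.sum_congr rfl fun v _ => hnorm v, Finset.sum_const_zero]
      exact zero_le_one
  have hfin := schur_test _ hR0 zero_le_one hRow hCol
  refine hfin.trans (le_of_eq ?_)
  congr 1
  rw [mul_one]
  have hm : ((m : ℝ) + (m : ℝ)) / 2 = (m : ℝ) := by ring
  push_cast
  rw [hm, Real.rpow_sub two_pos, Real.rpow_natCast, Real.rpow_natCast, div_eq_mul_inv]
end

section
/- Let d and m be positive integers, and let P₁, …, P_m be positive semidefinite complex d × d matrices. Let π₁, …, π_m be mutually orthogonal permutations of {1, …, m}, i.e. for i ≠ j the permutation πᵢ ∘ πⱼ⁻¹ has no fixed point. Then ‖Σ_{i=1}^m Pᵢ‖ ≤ Σ_{i=1}^m max_{j ∈ {1,…,m}} ‖√(P_j) · √(P_{πᵢ(j)})‖, where ‖·‖ is the operator norm (largest singular value) and √(P) denotes the positive semidefinite square root of a positive semidefinite matrix P. -/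
open scoped Matrix.Norms.L2Operator ComplexOrder
open scoped InnerProductSpace

private lemma aux_quadratic_bound {m : ℕ} {E : Type*} [NormedAddCommGroup E]
    [InnerProductSpace ℂ E] [CompleteSpace E]
    (T : Fin m → E →L[ℂ] E) (hT : ∀ j, IsSelfAdjoint (T j))
    (π : Fin m → Equiv.Perm (Fin m))
    (hπ : ∀ i j, i ≠ j → ∀ k, π i k ≠ π j k)
    (M : Fin m → ℝ) (hM : ∀ i j, ‖T j * T (π i j)‖ ≤ M i) (hM0 : ∀ i, 0 ≤ M i)
    (x : E) : ∑ j, ‖T j x‖ ^ 2 ≤ (∑ i, M i) * ‖x‖ ^ 2 := by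
  classical
  set w : Fin m → E := fun j => T j x with hw
  set u : E := ∑ j, T j (w j) with hu
  set S : ℝ := ∑ j, ‖w j‖ ^ 2 with hS
  have hsym : ∀ j (a b : E), ⟪T j a, b⟫_ℂ = ⟪a, T j b⟫_ℂ := fun j => (hT j).isSymmetric
  have hS0 : 0 ≤ S := Finset.sum_nonneg fun j _ => sq_nonneg _
  have hC0 : 0 ≤ ∑ i, M i := Finset.sum_nonneg fun i _ => hM0 i
  -- bijection i ↦ π i j for fixed j
  have hbij : ∀ j : Fin m, Function.Bijective (fun i => π i j) := by
    intro j
    apply Finite.injective_iff_bijective.mp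
    intro a b hab
    by_contra h
    exact hπ a b h j hab
  -- permutation sum invariance
  have hSperm : ∀ i : Fin m, ∑ j, ‖w (π i j)‖ ^ 2 = S := by
    intro i
    exact Equiv.sum_comp (π i) (fun j => ‖w j‖ ^ 2)
  -- ⟪x, u⟫ = S
  have hxu : ⟪x, u⟫_ℂ = (S : ℂ) := by
    rw [hu, inner_sum]
    rw [hS]
    push_cast
    refine Finset.sum_congr rfl fun j _ => ?_
    rw [← hsym j x (w j)]
    exact inner_self_eq_norm_sq_to_K (𝕜 := ℂ) (w j)
  -- ‖u‖² ≤ C * S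
  have huS : ‖u‖ ^ 2 ≤ (∑ i, M i) * S := by
    have h1 : (‖u‖ : ℝ) ^ 2 = RCLike.re ⟪u, u⟫_ℂ := (inner_self_eq_norm_sq (𝕜 := ℂ) u).symm
    have h2 : ⟪u, u⟫_ℂ = ∑ j, ∑ i, ⟪T j (w j), T (π i j) (w (π i j))⟫_ℂ := by
      rw [hu, sum_inner]
      refine Finset.sum_congr rfl fun j _ => ?_
      rw [inner_sum]
      exact (Equiv.sum_comp (Equiv.ofBijective _ (hbij j))
        (fun k => ⟪T j (w j), T k (w k)⟫_ℂ)).symm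
    have hterm : ∀ i j, RCLike.re ⟪T j (w j), T (π i j) (w (π i j))⟫_ℂ ≤
        M i * ((‖w j‖ ^ 2 + ‖w (π i j)‖ ^ 2) / 2) := by
      intro i j
      have e1 : ⟪T j (w j), T (π i j) (w (π i j))⟫_ℂ =
          ⟪w j, (T j * T (π i j)) (w (π i j))⟫_ℂ := by
        rw [ContinuousLinearMap.mul_apply]
        exact hsym j (w j) (T (π i j) (w (π i j)))
      have e2 : RCLike.re ⟪T j (w j), T (π i j) (w (π i j))⟫_ℂ ≤
          ‖w j‖ * (‖T j * T (π i j)‖ * ‖w (π i j)‖) := by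
        calc RCLike.re ⟪T j (w j), T (π i j) (w (π i j))⟫_ℂ
            ≤ ‖⟪w j, (T j * T (π i j)) (w (π i j))⟫_ℂ‖ := by
              rw [e1]; exact RCLike.re_le_norm _
          _ ≤ ‖w j‖ * ‖(T j * T (π i j)) (w (π i j))‖ := norm_inner_le_norm _ _
          _ ≤ ‖w j‖ * (‖T j * T (π i j)‖ * ‖w (π i j)‖) := by
              gcongr; exact ContinuousLinearMap.le_opNorm _ _
      refine e2.trans ?_
      have h4 : ‖w j‖ * ‖w (π i j)‖ ≤ (‖w j‖ ^ 2 + ‖w (π i j)‖ ^ 2) / 2 := by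
        nlinarith [sq_nonneg (‖w j‖ - ‖w (π i j)‖)]
      calc ‖w j‖ * (‖T j * T (π i j)‖ * ‖w (π i j)‖)
          = ‖T j * T (π i j)‖ * (‖w j‖ * ‖w (π i j)‖) := by ring
        _ ≤ M i * ((‖w j‖ ^ 2 + ‖w (π i j)‖ ^ 2) / 2) :=
            mul_le_mul (hM i j) h4
              (mul_nonneg (norm_nonneg _) (norm_nonneg _)) (hM0 i)
    calc ‖u‖ ^ 2 = RCLike.re ⟪u, u⟫_ℂ := h1
      _ = ∑ j, ∑ i, RCLike.re ⟪T j (w j), T (π i j) (w (π i j))⟫_ℂ := by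
          rw [h2, map_sum]
          exact Finset.sum_congr rfl fun j _ => map_sum _ _ _
      _ ≤ ∑ j, ∑ i, M i * ((‖w j‖ ^ 2 + ‖w (π i j)‖ ^ 2) / 2) :=
          Finset.sum_le_sum fun j _ => Finset.sum_le_sum fun i _ => hterm i j
      _ = ∑ i, ∑ j, M i * ((‖w j‖ ^ 2 + ‖w (π i j)‖ ^ 2) / 2) := Finset.sum_comm
      _ = ∑ i, M i * S := by
          refine Finset.sum_congr rfl fun i _ => ?_
          rw [← Finset.mul_sum]
          congr 1
          have : ∑ j, (‖w j‖ ^ 2 + ‖w (π i j)‖ ^ 2) / 2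
              = ((∑ j, ‖w j‖ ^ 2) + ∑ j, ‖w (π i j)‖ ^ 2) / 2 := by
            rw [← Finset.sum_add_distrib, Finset.sum_div]
          rw [this, hSperm i, ← hS]
          ring
      _ = (∑ i, M i) * S := (Finset.sum_mul _ _ _).symm
  -- conclude
  have hSle : S ≤ ‖x‖ * ‖u‖ := by
    have : S = RCLike.re ⟪x, u⟫_ℂ := by rw [hxu]; simp
    rw [this]
    exact (RCLike.re_le_norm _).trans ((norm_inner_le_norm _ _))
  rcases eq_or_lt_of_le hS0 with h0 | hpos
  · rw [← h0]
    positivity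
  · have hsq : S ^ 2 ≤ ((∑ i, M i) * ‖x‖ ^ 2) * S := by
      calc S ^ 2 ≤ (‖x‖ * ‖u‖) ^ 2 := by nlinarith
        _ = ‖x‖ ^ 2 * ‖u‖ ^ 2 := by ring
        _ ≤ ‖x‖ ^ 2 * ((∑ i, M i) * S) := by
            exact mul_le_mul_of_nonneg_left huS (sq_nonneg _)
        _ = ((∑ i, M i) * ‖x‖ ^ 2) * S := by ring
    have := le_of_mul_le_mul_right (by nlinarith : S * S ≤ ((∑ i, M i) * ‖x‖ ^ 2) * S) hpos
    exact this

/-- The positive semidefinite square root of a positive semidefinite matrix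
(the definition `Matrix.PosSemidef.sqrt` of the older Mathlib, since removed). -/
noncomputable def Matrix.PosSemidef.sqrt {n 𝕜 : Type*} [Fintype n] [DecidableEq n] [RCLike 𝕜]
    {A : Matrix n n 𝕜} (hA : A.PosSemidef) : Matrix n n 𝕜 :=
  (hA.1.eigenvectorUnitary : Matrix n n 𝕜) *
    Matrix.diagonal (fun i => ((Real.sqrt (hA.1.eigenvalues i) : ℝ) : 𝕜)) *
    (star hA.1.eigenvectorUnitary : Matrix n n 𝕜)

theorem Matrix.PosSemidef.posSemidef_sqrt_isHermitian {n : Type*} [Fintype n] [DecidableEq n]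
    {A : Matrix n n ℂ} (hA : A.PosSemidef) : hA.sqrt.IsHermitian := by
  have hd : (star fun i => ((Real.sqrt (hA.1.eigenvalues i) : ℝ) : ℂ)) =
      fun i => ((Real.sqrt (hA.1.eigenvalues i) : ℝ) : ℂ) := funext fun i => by simp
  simp only [Matrix.IsHermitian, Matrix.PosSemidef.sqrt, Matrix.conjTranspose_mul,
    Matrix.diagonal_conjTranspose, hd, Matrix.star_eq_conjTranspose,
    Matrix.conjTranspose_conjTranspose, mul_assoc]
  congr 3

theorem Matrix.PosSemidef.sqrt_mul_self' {n : Type*} [Fintype n] [DecidableEq n]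
    {A : Matrix n n ℂ} (hA : A.PosSemidef) : hA.sqrt * hA.sqrt = A := by
  have hU : (star hA.1.eigenvectorUnitary : Matrix n n ℂ) * hA.1.eigenvectorUnitary = 1 :=
    Unitary.star_mul_self_of_mem hA.1.eigenvectorUnitary.2
  conv_rhs => rw [hA.1.spectral_theorem, Unitary.conjStarAlgAut_apply]
  simp only [Matrix.PosSemidef.sqrt, mul_assoc]
  rw [← mul_assoc (star _ : Matrix n n ℂ) _ (Matrix.diagonal _ * _), hU, one_mul,
    ← mul_assoc (Matrix.diagonal _) (Matrix.diagonal _), Matrix.diagonal_mul_diagonal]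
  congr 3
  ext i
  simp only [Function.comp_apply]
  rw [← RCLike.ofReal_mul, Real.mul_self_sqrt (hA.eigenvalues_nonneg i)]

/-- Lemma 3 of the paper (Lemma 2 of Tomamichel–Fehr–Kaniewski–Wehner): for positive
semidefinite matrices `P₁, …, P_m` and mutually orthogonal permutations `π₁, …, π_m`
of `{1, …, m}`, `‖Σᵢ Pᵢ‖ ≤ Σᵢ maxⱼ ‖√(Pⱼ)·√(P_{πᵢ(j)})‖`. -/
theorem sum_opNorm_le_of_orthogonal_perms (d m : ℕ) (hd : 0 < d) (hm : 0 < m)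
    (P : Fin m → Matrix (Fin d) (Fin d) ℂ) (hP : ∀ i, (P i).PosSemidef)
    (π : Fin m → Equiv.Perm (Fin m))
    (hπ : ∀ i j, i ≠ j → ∀ k, π i k ≠ π j k) :
    ‖∑ i, P i‖ ≤
      ∑ i, Finset.univ.sup' ⟨⟨0, hm⟩, Finset.mem_univ _⟩
        (fun j => ‖(hP j).sqrt * (hP (π i j)).sqrt‖) := by
  classical
  haveI : NeZero d := ⟨hd.ne'⟩
  set T : Fin m → EuclideanSpace ℂ (Fin d) →L[ℂ] EuclideanSpace ℂ (Fin d) :=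
    fun j => Matrix.toEuclideanCLM (𝕜 := ℂ) ((hP j).sqrt) with hTdef
  have hT : ∀ j, IsSelfAdjoint (T j) := by
    intro j
    rw [IsSelfAdjoint, hTdef, ← map_star]
    congr 1
    exact (hP j).posSemidef_sqrt_isHermitian
  set M : Fin m → ℝ := fun i => Finset.univ.sup' ⟨⟨0, hm⟩, Finset.mem_univ _⟩
    (fun j => ‖(hP j).sqrt * (hP (π i j)).sqrt‖) with hMdef
  have hMle : ∀ i j, ‖T j * T (π i j)‖ ≤ M i := by
    intro i j
    have h1 : T j * T (π i j) =
        Matrix.toEuclideanCLM (𝕜 := ℂ) ((hP j).sqrt * (hP (π i j)).sqrt) := (map_mul _ _ _).symm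
    rw [h1, ← Matrix.cstar_norm_def, hMdef]
    exact Finset.le_sup' (fun j => ‖(hP j).sqrt * (hP (π i j)).sqrt‖) (Finset.mem_univ j)
  have hM0 : ∀ i, 0 ≤ M i := by
    intro i
    rw [hMdef]
    exact (norm_nonneg _).trans
      (Finset.le_sup' (fun j => ‖(hP j).sqrt * (hP (π i j)).sqrt‖)
        (Finset.mem_univ (⟨0, hm⟩ : Fin m)))
  have hC0 : (0:ℝ) ≤ ∑ i, M i := Finset.sum_nonneg fun i _ => hM0 i
  have key := aux_quadratic_bound T hT π hπ M hMle hM0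
  -- the sum matrix is PSD
  have hQ : (∑ i, P i).PosSemidef :=
    Finset.sum_induction P Matrix.PosSemidef (fun a b ha hb => ha.add hb)
      Matrix.PosSemidef.zero (fun i _ => hP i)
  have hH : (∑ i, P i).IsHermitian := hQ.1
  -- the CLM of the sum
  have hQCLM : Matrix.toEuclideanCLM (𝕜 := ℂ) (∑ i, P i) = ∑ j, T j * T j := by
    rw [map_sum]
    refine Finset.sum_congr rfl fun j _ => ?_
    rw [hTdef, ← map_mul, (hP j).sqrt_mul_self']
  -- each eigenvalue is at most C
  have heig : ∀ k : Fin d, hH.eigenvalues k ≤ ∑ i, M i := by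
    intro k
    set x : EuclideanSpace ℂ (Fin d) := hH.eigenvectorBasis k with hx
    have hxnorm : ‖x‖ = 1 := hH.eigenvectorBasis.orthonormal.1 k
    have hQx : Matrix.toEuclideanCLM (𝕜 := ℂ) (∑ i, P i) x =
        (hH.eigenvalues k : ℂ) • x := by
      apply (WithLp.equiv 2 (Fin d → ℂ)).injective
      rw [WithLp.equiv_apply, Matrix.ofLp_toEuclideanCLM]
      have := hH.mulVec_eigenvectorBasis k
      rw [WithLp.equiv_apply, WithLp.ofLp_smul]
      exact this.trans (by rw [hx]; ext i; simp)
    have hsum : (∑ j, ‖T j x‖ ^ 2 : ℝ) = hH.eigenvalues k := by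
      have h1 : ((∑ j, ‖T j x‖ ^ 2 : ℝ) : ℂ) =
          ⟪x, Matrix.toEuclideanCLM (𝕜 := ℂ) (∑ i, P i) x⟫_ℂ := by
        rw [hQCLM, ContinuousLinearMap.sum_apply, inner_sum]
        push_cast
        refine Finset.sum_congr rfl fun j _ => ?_
        rw [Function.comp_apply]
        have hs := (hT j).isSymmetric x (T j x)
        simp only [ContinuousLinearMap.coe_coe] at hs
        rw [← hs]
        exact (inner_self_eq_norm_sq_to_K (𝕜 := ℂ) (T j x)).symm
      rw [hQx, inner_smul_right, inner_self_eq_norm_sq_to_K, hxnorm] at h1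
      have h2 : ((∑ j, ‖T j x‖ ^ 2 : ℝ) : ℂ) = ((hH.eigenvalues k : ℝ) : ℂ) := by
        rw [h1]; norm_num
      exact_mod_cast h2
    calc hH.eigenvalues k = ∑ j, ‖T j x‖ ^ 2 := hsum.symm
      _ ≤ (∑ i, M i) * ‖x‖ ^ 2 := key x
      _ = ∑ i, M i := by rw [hxnorm]; ring
  -- reduce to the diagonal matrix
  have hU : (hH.eigenvectorUnitary : Matrix (Fin d) (Fin d) ℂ) ∈
      unitary (Matrix (Fin d) (Fin d) ℂ) := hH.eigenvectorUnitary.2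
  have hdiag : ‖Matrix.diagonal ((RCLike.ofReal : ℝ → ℂ) ∘ hH.eigenvalues)‖ ≤ ∑ i, M i := by
    rw [Matrix.l2_opNorm_def]
    refine ContinuousLinearMap.opNorm_le_bound _ hC0 fun x => ?_
    set y := Matrix.toEuclideanLin (Matrix.diagonal ((RCLike.ofReal : ℝ → ℂ) ∘ hH.eigenvalues)) x
      with hy
    show ‖y‖ ≤ _
    have hyi : ∀ i, ‖y i‖ ≤ (∑ i, M i) * ‖x i‖ := by
      intro i
      have h5 : y i = (hH.eigenvalues i : ℂ) * x i := by
        show (WithLp.equiv 2 (Fin d → ℂ) y) i = _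
        rw [hy, WithLp.equiv_apply, Matrix.ofLp_toEuclideanLin_apply, Matrix.mulVec_diagonal]
        rfl
      rw [h5, norm_mul, Complex.norm_real, Real.norm_eq_abs,
        abs_of_nonneg (hQ.eigenvalues_nonneg i)]
      exact mul_le_mul_of_nonneg_right (heig i) (norm_nonneg _)
    rw [EuclideanSpace.norm_eq, EuclideanSpace.norm_eq]
    calc Real.sqrt (∑ i, ‖y i‖ ^ 2) ≤
        Real.sqrt (∑ i, ((∑ i, M i) * ‖x i‖) ^ 2) := by
          apply Real.sqrt_le_sqrt
          refine Finset.sum_le_sum fun i _ => ?_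
          nlinarith [hyi i, norm_nonneg (y i)]
      _ = Real.sqrt ((∑ i, M i) ^ 2 * ∑ i, ‖x i‖ ^ 2) := by
          congr 1
          rw [Finset.mul_sum]
          exact Finset.sum_congr rfl fun i _ => by ring
      _ = (∑ i, M i) * Real.sqrt (∑ i, ‖x i‖ ^ 2) := by
          rw [Real.sqrt_mul (sq_nonneg _), Real.sqrt_sq hC0]
  calc ‖∑ i, P i‖ = ‖(hH.eigenvectorUnitary : Matrix (Fin d) (Fin d) ℂ) *
        (Matrix.diagonal ((RCLike.ofReal : ℝ → ℂ) ∘ hH.eigenvalues) *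
          star (hH.eigenvectorUnitary : Matrix (Fin d) (Fin d) ℂ))‖ := by
        rw [← mul_assoc]
        conv_lhs => rw [hH.spectral_theorem, Unitary.conjStarAlgAut_apply]
    _ = ‖Matrix.diagonal ((RCLike.ofReal : ℝ → ℂ) ∘ hH.eigenvalues) *
          star (hH.eigenvectorUnitary : Matrix (Fin d) (Fin d) ℂ)‖ :=
        CStarRing.norm_mem_unitary_mul _ hU
    _ = ‖Matrix.diagonal ((RCLike.ofReal : ℝ → ℂ) ∘ hH.eigenvalues)‖ :=
        CStarRing.norm_mul_mem_unitary _ (Unitary.star_mem hU)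
    _ ≤ ∑ i, M i := hdiag
end

section
/- Let n be an even integer with n ≥ 2, let C_{n,n/2} = {γ ∈ 𝔽₂ⁿ : Hamming weight of γ equals n/2}, and let N = binomial(n, n/2). Then there exist mutually orthogonal permutations π₁, …, π_N of C_{n,n/2} such that for each k ∈ {0, 1, …, n/2}, the number of indices j ∈ {1, …, N} with the property that for every γ ∈ C_{n,n/2} the number of positions i at which γᵢ = 1 and (π_j(γ))ᵢ = 1 equals n/2 − k, is exactly binomial(n/2, k)². -/
open Finset

/-- Hamming weight of a vector in `𝔽₂ⁿ`. -/
def wt {n : ℕ} (θ : Fin n → ZMod 2) : ℕ := (Finset.univ.filter fun i => θ i = 1).card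

def ind {n : ℕ} (s : Finset (Fin n)) : Fin n → ZMod 2 := fun i => if i ∈ s then 1 else 0

def supp {n : ℕ} (γ : Fin n → ZMod 2) : Finset (Fin n) := Finset.univ.filter fun i => γ i = 1

lemma wt_eq_card_supp {n : ℕ} (γ : Fin n → ZMod 2) : wt γ = (supp γ).card := rfl

lemma mem_supp {n : ℕ} (γ : Fin n → ZMod 2) (i : Fin n) : i ∈ supp γ ↔ γ i = 1 := by
  simp [supp]

lemma supp_ind {n : ℕ} (s : Finset (Fin n)) : supp (ind s) = s := by
  ext i
  rw [mem_supp, ind]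
  split_ifs with h <;> simp [h]

lemma ind_supp {n : ℕ} (γ : Fin n → ZMod 2) : ind (supp γ) = γ := by
  funext i
  rw [ind]
  have h : γ i = 0 ∨ γ i = 1 := by
    have : ∀ x : ZMod 2, x = 0 ∨ x = 1 := by decide
    exact this (γ i)
  rcases h with h | h <;> simp [mem_supp, h]

example : ∀ x : ZMod 2, x = 0 ∨ x = 1 := by decide

lemma matching_decomp {X : Type*} [Fintype X] [DecidableEq X] :
    ∀ (r : ℕ) (t : X → Finset X),
      (∀ x, (t x).card = r) →
      (∀ y, (univ.filter (fun x => y ∈ t x)).card = r) →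
      ∃ f : Fin r → Equiv.Perm X,
        (∀ a x, f a x ∈ t x) ∧ ∀ a b, a ≠ b → ∀ x, f a x ≠ f b x := by
  intro r
  induction r with
  | zero =>
    intro t _ _
    exact ⟨Fin.elim0, fun a => a.elim0, fun a => a.elim0⟩
  | succ r ih =>
    intro t hrow hcol
    classical
    -- Hall condition
    have hall : ∀ s : Finset X, s.card ≤ (s.biUnion t).card := by
      intro s
      have key : ∀ x ∈ s, (t x).card = ∑ y ∈ s.biUnion t, (if y ∈ t x then 1 else 0) := by
        intro x hx
        rw [Finset.sum_boole]
        congr 1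
        apply Finset.Subset.antisymm
        · intro y hy
          exact mem_filter.mpr ⟨mem_biUnion.mpr ⟨x, hx, hy⟩, hy⟩
        · intro y hy
          exact (mem_filter.mp hy).2
      have h1 : (r+1) * s.card = ∑ x ∈ s, (t x).card := by
        rw [Finset.sum_congr rfl (fun x _ => hrow x), Finset.sum_const, smul_eq_mul, mul_comm]
      have h2 : ∑ x ∈ s, (t x).card = ∑ y ∈ s.biUnion t, ∑ x ∈ s, (if y ∈ t x then 1 else 0) := by
        rw [Finset.sum_congr rfl key, Finset.sum_comm]
      have h3 : ∀ y, (∑ x ∈ s, (if y ∈ t x then 1 else 0)) ≤ r + 1 := by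
        intro y
        rw [Finset.sum_boole]
        calc (s.filter (fun x => y ∈ t x)).card
            ≤ (univ.filter (fun x => y ∈ t x)).card :=
              Finset.card_le_card (Finset.filter_subset_filter _ (subset_univ s))
          _ = r + 1 := hcol y
      have h4 : (r+1) * s.card ≤ (r+1) * (s.biUnion t).card := by
        rw [h1, h2]
        calc ∑ y ∈ s.biUnion t, ∑ x ∈ s, (if y ∈ t x then 1 else 0)
            ≤ ∑ _y ∈ s.biUnion t, (r+1) := Finset.sum_le_sum (fun y _ => h3 y)
          _ = (s.biUnion t).card * (r+1) := by rw [Finset.sum_const, smul_eq_mul]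
          _ = (r+1) * (s.biUnion t).card := mul_comm _ _
      exact Nat.le_of_mul_le_mul_left h4 (Nat.succ_pos r)
    obtain ⟨g, hginj, hgmem⟩ := (Finset.all_card_le_biUnion_card_iff_exists_injective t).mp hall
    set e : Equiv.Perm X := Equiv.ofBijective g ((Finite.injective_iff_bijective).mp hginj) with he
    have hex : ∀ x, e x = g x := fun x => rfl
    have hgR : ∀ x, e x ∈ t x := fun x => by rw [hex]; exact hgmem x
    set t' : X → Finset X := fun x => (t x).erase (e x) with ht'
    have hrow' : ∀ x, (t' x).card = r := by
      intro x
      rw [ht']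
      simp only
      rw [Finset.card_erase_of_mem (hgR x), hrow x]
      omega
    have hcol' : ∀ y, (univ.filter (fun x => y ∈ t' x)).card = r := by
      intro y
      have hmem : e.symm y ∈ univ.filter (fun x => y ∈ t x) := by
        simp only [mem_filter, mem_univ, true_and]
        have := hgR (e.symm y)
        rwa [Equiv.apply_symm_apply] at this
      have : univ.filter (fun x => y ∈ t' x) = (univ.filter (fun x => y ∈ t x)).erase (e.symm y) := by
        ext x
        simp only [ht', mem_filter, mem_erase, mem_univ, true_and]
        constructor
        · rintro ⟨h2, h1⟩
          refine ⟨fun hxe => h2 ?_, h1⟩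
          rw [hxe, Equiv.apply_symm_apply]
        · rintro ⟨h2, h1⟩
          refine ⟨fun hy => h2 ?_, h1⟩
          rw [hy, Equiv.symm_apply_apply]
      rw [this, Finset.card_erase_of_mem hmem, hcol y]
      omega
    obtain ⟨f', hf'R, hf'd⟩ := ih t' hrow' hcol'
    have hf'mem : ∀ a x, f' a x ∈ t x ∧ f' a x ≠ e x := by
      intro a x
      have := hf'R a x
      rw [ht'] at this
      simp only [mem_erase] at this
      exact ⟨this.2, this.1⟩
    refine ⟨Fin.cons e f', ?_, ?_⟩
    · intro a x
      refine Fin.cases ?_ ?_ a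
      · simpa using hgR x
      · intro b
        simpa using (hf'mem b x).1
    · intro a b hab x h
      apply hab
      rcases Fin.eq_zero_or_eq_succ a with rfl | ⟨a', rfl⟩ <;>
        rcases Fin.eq_zero_or_eq_succ b with rfl | ⟨b', rfl⟩
      · rfl
      · simp only [Fin.cons_zero, Fin.cons_succ] at h
        exact absurd h.symm (hf'mem b' x).2
      · simp only [Fin.cons_zero, Fin.cons_succ] at h
        exact absurd h (hf'mem a' x).2
      · simp only [Fin.cons_succ] at h
        by_contra hne
        exact hf'd a' b' (fun hh => hne (by rw [hh])) x h

lemma count_subsets {n : ℕ} (m k : ℕ) (hnm : n = m + m) (hk : k ≤ m)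
    (g : Finset (Fin n)) (hg : g.card = m) :
    ((univ : Finset (Finset (Fin n))).filter
      (fun s => s.card = m ∧ (g ∩ s).card = m - k)).card = m.choose k ^ 2 := by
  classical
  have hgc : gᶜ.card = m := by
    have := Finset.card_compl g
    rw [hg] at this
    simp only [Fintype.card_fin] at this
    omega
  have hcard : ((g.powersetCard (m - k)) ×ˢ (gᶜ.powersetCard k)).card = m.choose k ^ 2 := by
    rw [Finset.card_product, Finset.card_powersetCard, Finset.card_powersetCard, hg, hgc,
      Nat.choose_symm hk, sq]
  rw [← hcard]
  apply Finset.card_nbij' (fun s => (s ∩ g, s \ g)) (fun p => p.1 ∪ p.2)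
  · intro s hs
    simp only [Finset.mem_coe, mem_filter, mem_univ, true_and] at hs
    obtain ⟨hsm, hsk⟩ := hs
    have h1 : (s ∩ g).card = m - k := by rw [Finset.inter_comm]; exact hsk
    have h2 : (s \ g).card = k := by
      have := Finset.card_inter_add_card_sdiff s g
      omega
    simp only [Finset.mem_coe, Finset.mem_product, Finset.mem_powersetCard]
    exact ⟨⟨Finset.inter_subset_right, h1⟩,
      ⟨fun x hx => Finset.mem_compl.mpr (Finset.mem_sdiff.mp hx).2, h2⟩⟩
  · rintro ⟨t₁, t₂⟩ ht
    simp only [Finset.mem_coe, Finset.mem_product, Finset.mem_powersetCard] at ht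
    obtain ⟨⟨ht1sub, ht1⟩, ⟨ht2sub, ht2⟩⟩ := ht
    have hdisj : Disjoint t₁ t₂ := by
      apply Finset.disjoint_left.mpr
      intro x hx1 hx2
      exact (Finset.mem_compl.mp (ht2sub hx2)) (ht1sub hx1)
    have hcup : (t₁ ∪ t₂).card = m := by
      rw [Finset.card_union_of_disjoint hdisj, ht1, ht2]
      omega
    have hint : g ∩ (t₁ ∪ t₂) = t₁ := by
      rw [Finset.inter_union_distrib_left]
      have e1 : g ∩ t₁ = t₁ := Finset.inter_eq_right.mpr ht1sub
      have e2 : g ∩ t₂ = ∅ := by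
        apply Finset.eq_empty_of_forall_notMem
        intro x hx
        obtain ⟨hxg, hxt2⟩ := Finset.mem_inter.mp hx
        exact (Finset.mem_compl.mp (ht2sub hxt2)) hxg
      rw [e1, e2, Finset.union_empty]
    simp only [Finset.mem_coe, mem_filter, mem_univ, true_and]
    exact ⟨hcup, by rw [hint, ht1]⟩
  · intro s hs
    simp only
    rw [Finset.union_comm, Finset.sdiff_union_inter]
  · rintro ⟨t₁, t₂⟩ ht
    simp only [Finset.mem_coe, Finset.mem_product, Finset.mem_powersetCard] at ht
    obtain ⟨⟨ht1sub, _⟩, ⟨ht2sub, _⟩⟩ := ht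
    have e1 : (t₁ ∪ t₂) ∩ g = t₁ := by
      rw [Finset.union_inter_distrib_right]
      have e1 : t₁ ∩ g = t₁ := Finset.inter_eq_left.mpr ht1sub
      have e2 : t₂ ∩ g = ∅ := by
        apply Finset.eq_empty_of_forall_notMem
        intro x hx
        obtain ⟨hxt2, hxg⟩ := Finset.mem_inter.mp hx
        exact (Finset.mem_compl.mp (ht2sub hxt2)) hxg
      rw [e1, e2, Finset.union_empty]
    have e2 : (t₁ ∪ t₂) \ g = t₂ := by
      ext x
      simp only [Finset.mem_sdiff, Finset.mem_union]
      constructor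
      · rintro ⟨hx1 | hx2, hxg⟩
        · exact absurd (ht1sub hx1) hxg
        · exact hx2
      · intro hx2
        exact ⟨Or.inr hx2, Finset.mem_compl.mp (ht2sub hx2)⟩
    simp [e1, e2]
lemma row_count {n m k : ℕ} (hnm : n = m + m) (hk : k ≤ m)
    (γ : Fin n → ZMod 2) (hγ : wt γ = m) :
    ((univ : Finset {δ : Fin n → ZMod 2 // wt δ = m}).filter
      (fun δ : {δ : Fin n → ZMod 2 // wt δ = m} =>
        (univ.filter fun i : Fin n => γ i = 1 ∧ (δ : Fin n → ZMod 2) i = 1).card = m - k)).card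
      = m.choose k ^ 2 := by
  classical
  have key : ∀ δ : Fin n → ZMod 2,
      (univ.filter fun i => γ i = 1 ∧ δ i = 1) = supp γ ∩ supp δ := by
    intro δ
    ext i
    simp [supp, Finset.mem_inter, Finset.mem_filter]
  rw [← count_subsets m k hnm hk (supp γ) (wt_eq_card_supp γ ▸ hγ)]
  refine Finset.card_bij' (fun (δ : {δ : Fin n → ZMod 2 // wt δ = m}) _ => supp (δ : Fin n → ZMod 2))
    (fun s hs => (⟨ind s, ?_⟩ : {δ : Fin n → ZMod 2 // wt δ = m})) ?_ ?_ ?_ ?_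
  · rw [wt_eq_card_supp, supp_ind]
    exact ((mem_filter.mp hs).2).1
  · intro δ hδ
    simp only [mem_filter, mem_univ, true_and] at hδ ⊢
    rw [key (δ : Fin n → ZMod 2)] at hδ
    exact ⟨(wt_eq_card_supp _ ▸ δ.2 : (supp (δ : Fin n → ZMod 2)).card = m), hδ⟩
  · intro s hs
    simp only [mem_filter, mem_univ, true_and] at hs ⊢
    rw [key (ind s), supp_ind]
    exact hs.2
  · intro δ _
    exact Subtype.ext (ind_supp _)
  · intro s _
    exact supp_ind s

/-- Lemma 4 of the paper: there exist `N = C(n, n/2)` mutually orthogonal permutations of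
`C_{n,n/2}` such that for each `k ≤ n/2` exactly `C(n/2, k)²` of them overlap every string
with its image in exactly `n/2 − k` common `1`-positions. -/
theorem orthogonal_permutations_exist (n : ℕ) (hn : 2 ≤ n) (hne : Even n) :
    ∃ π : Fin (n.choose (n / 2)) → Equiv.Perm {γ : Fin n → ZMod 2 // wt γ = n / 2},
      (∀ i j, i ≠ j → ∀ γ, π i γ ≠ π j γ) ∧
      ∀ k ≤ n / 2,
        (Finset.univ.filter fun j : Fin (n.choose (n / 2)) =>
          ∀ γ : {γ : Fin n → ZMod 2 // wt γ = n / 2},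
            (Finset.univ.filter fun i : Fin n =>
              (γ : Fin n → ZMod 2) i = 1 ∧ ((π j γ : {γ : Fin n → ZMod 2 // wt γ = n / 2}) :
                Fin n → ZMod 2) i = 1).card = n / 2 - k).card = (n / 2).choose k ^ 2 := by
  classical
  obtain ⟨m', hm'⟩ := hne
  set m : ℕ := n / 2 with hm
  have hnm : n = m + m := by omega
  set X := {γ : Fin n → ZMod 2 // wt γ = m} with hX
  -- neighborhoods: δ's overlapping γ in exactly m - k ones
  set t : ℕ → X → Finset X := fun k γ => (univ : Finset X).filter
    (fun δ : X => (Finset.univ.filter fun i : Fin n =>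
      (γ : Fin n → ZMod 2) i = 1 ∧ (δ : Fin n → ZMod 2) i = 1).card = m - k) with htdef
  have hmem_t : ∀ k (γ δ : X), δ ∈ t k γ ↔
      (Finset.univ.filter fun i : Fin n =>
        (γ : Fin n → ZMod 2) i = 1 ∧ (δ : Fin n → ZMod 2) i = 1).card = m - k := by
    intro k γ δ
    rw [htdef]
    simp only [Finset.mem_filter, Finset.mem_univ, true_and]
  have hsymm : ∀ k (γ δ : X), δ ∈ t k γ ↔ γ ∈ t k δ := by
    intro k γ δ
    rw [hmem_t, hmem_t]
    constructor <;> intro h <;> rw [← h] <;> congr 1 <;> apply Finset.filter_congr <;>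
      intro i _ <;> exact and_comm
  have hrow : ∀ k ≤ m, ∀ γ : X, (t k γ).card = m.choose k ^ 2 := by
    intro k hk γ
    rw [htdef]
    exact row_count hnm hk (γ : Fin n → ZMod 2) γ.2
  have hcol : ∀ k ≤ m, ∀ δ : X, ((univ : Finset X).filter (fun γ => δ ∈ t k γ)).card
      = m.choose k ^ 2 := by
    intro k hk δ
    rw [show ((univ : Finset X).filter (fun γ => δ ∈ t k γ))
        = ((univ : Finset X).filter (fun γ => γ ∈ t k δ)) from
      Finset.filter_congr (fun γ _ => by rw [hsymm])]
    rw [show ((univ : Finset X).filter (fun γ => γ ∈ t k δ)) = t k δ by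
      rw [htdef]; simp]
    exact hrow k hk δ
  -- matchings for each k
  have hmatch : ∀ k : Fin (m + 1), ∃ f : Fin (m.choose k ^ 2) → Equiv.Perm X,
      (∀ a x, f a x ∈ t k x) ∧ ∀ a b, a ≠ b → ∀ x, f a x ≠ f b x := by
    intro k
    exact matching_decomp (m.choose k ^ 2) (t k) (hrow k (by omega)) (hcol k (by omega))
  choose f hf1 hf2 using hmatch
  -- Vandermonde
  have hvdm : ∑ k ∈ Finset.range (m + 1), m.choose k ^ 2 = n.choose m := by
    rw [hnm, Nat.add_choose_eq, Finset.Nat.sum_antidiagonal_eq_sum_range_succ_mk]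
    apply Finset.sum_congr rfl
    intro k hk
    rw [Finset.mem_range] at hk
    rw [Nat.choose_symm (by omega), sq]
  have hcards : Fintype.card (Fin (n.choose (n / 2)))
      = Fintype.card (Σ k : Fin (m + 1), Fin (m.choose k ^ 2)) := by
    rw [Fintype.card_fin, Fintype.card_sigma]
    simp only [Fintype.card_fin]
    rw [Fin.sum_univ_eq_sum_range (fun k => m.choose k ^ 2), hvdm]
  set E := Fintype.equivOfCardEq hcards with hE
  set π : Fin (n.choose (n / 2)) → Equiv.Perm X := fun j => f (E j).1 (E j).2 with hπ
  have hπR : ∀ j, ∀ γ : X, (Finset.univ.filter fun i : Fin n =>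
      (γ : Fin n → ZMod 2) i = 1 ∧ ((π j γ : X) : Fin n → ZMod 2) i = 1).card
        = m - ((E j).1 : ℕ) := by
    intro j γ
    have := hf1 (E j).1 (E j).2 γ
    rw [hmem_t] at this
    exact this
  have hfstle : ∀ j, ((E j).1 : ℕ) ≤ m := fun j => by omega
  -- X is nonempty
  obtain ⟨s0, _, hs0⟩ := Finset.exists_subset_card_eq
    (show m ≤ (univ : Finset (Fin n)).card by simp [hnm])
  have hγ0 : wt (ind s0) = m := by rw [wt_eq_card_supp, supp_ind, hs0]
  set γ0 : X := ⟨ind s0, hγ0⟩ with hγ0d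
  refine ⟨π, ?_, ?_⟩
  · intro i j hij γ hcontra
    have h1 := hπR i γ
    have h2 := hπR j γ
    rw [hcontra] at h1
    have hk12 : (E i).1 = (E j).1 := by
      have l1 := hfstle i
      have l2 := hfstle j
      have : m - ((E i).1 : ℕ) = m - ((E j).1 : ℕ) := by rw [← h1, ← h2]
      exact Fin.ext (by omega)
    have hEne : E i ≠ E j := fun h => hij (E.injective h)
    rcases hEi : E i with ⟨k1, a1⟩
    rcases hEj : E j with ⟨k2, a2⟩
    rw [hEi, hEj] at hk12
    simp only at hk12
    subst hk12
    have hane : a1 ≠ a2 := by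
      intro h
      apply hEne
      rw [hEi, hEj, h]
    apply hf2 k1 a1 a2 hane γ
    have e1 : π i γ = f k1 a1 γ := by
      show f (E i).1 (E i).2 γ = f k1 a1 γ
      rw [hEi]
    have e2 : π j γ = f k1 a2 γ := by
      show f (E j).1 (E j).2 γ = f k1 a2 γ
      rw [hEj]
    rw [← e1, ← e2, hcontra]
  · intro k hk
    have hkm : k ≤ m := hk
    set kf : Fin (m + 1) := ⟨k, by omega⟩ with hkf
    have hfilter : (Finset.univ.filter fun j : Fin (n.choose (n / 2)) =>
          ∀ γ : X, (Finset.univ.filter fun i : Fin n =>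
              (γ : Fin n → ZMod 2) i = 1 ∧ ((π j γ : X) : Fin n → ZMod 2) i = 1).card = m - k)
        = Finset.univ.filter (fun j => (E j).1 = kf) := by
      apply Finset.filter_congr
      intro j _
      constructor
      · intro hall
        have h1 := hπR j γ0
        have h2 := hall γ0
        have l1 := hfstle j
        apply Fin.ext
        show ((E j).1 : ℕ) = k
        omega
      · intro hkeq γ
        have h1 := hπR j γ
        rw [h1, hkeq]
    rw [hfilter]
    have hstep : (Finset.univ.filter (fun j => (E j).1 = kf)).card
        = (Finset.univ.filter (fun p : (Σ k' : Fin (m + 1), Fin (m.choose k' ^ 2)) =>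
            p.1 = kf)).card := by
      apply Finset.card_nbij (i := fun j => E j)
      · intro j hj
        simp only [Finset.mem_coe, Finset.mem_filter, Finset.mem_univ, true_and] at hj ⊢
        exact hj
      · exact fun a _ b _ hab => E.injective hab
      · intro p hp
        simp only [Finset.coe_filter, Set.mem_setOf_eq, Finset.mem_univ, true_and] at hp
        refine ⟨E.symm p, ?_, Equiv.apply_symm_apply E p⟩
        simp only [Finset.coe_filter, Set.mem_setOf_eq, Finset.mem_univ, true_and,
          Equiv.apply_symm_apply]
        exact hp
    rw [hstep]
    conv_rhs => rw [← Finset.card_fin (m.choose k ^ 2)]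
    refine Finset.card_bij' (fun p hp => (⟨(p.2 : ℕ), ?_⟩ : Fin (m.choose k ^ 2)))
        (fun a _ => (⟨kf, ⟨(a : ℕ), by exact a.2⟩⟩ :
          Σ k' : Fin (m + 1), Fin (m.choose k' ^ 2))) ?_ ?_ ?_ ?_
    · simp only [Finset.mem_filter, Finset.mem_univ, true_and] at hp
      have h2 := p.2.2
      have h3 : m.choose (p.1 : ℕ) ^ 2 = m.choose k ^ 2 := by rw [hp, hkf]
      omega
    · intro p hp
      exact Finset.mem_univ _
    · intro a _
      simp only [Finset.mem_filter, Finset.mem_univ, true_and]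
    · intro p hp
      simp only [Finset.mem_filter, Finset.mem_univ, true_and] at hp
      refine Sigma.ext hp.symm ?_
      rw [Fin.heq_ext_iff (by simp only [hp])]
    · intro a _
      apply Fin.ext
      rfl
end

section
/- For every even integer n ≥ 2, the inequality (1 / binomial(n, n/2)) · Σ_{k=0}^{n/2} binomial(n/2, k)² · 2^{-k/2} ≤ √e · (cos(π/8))ⁿ holds, where 2^{-k/2} = √(2^{-k}), e is Euler's number, and the inequality is between real numbers. -/
open Finset

private lemma prod_identity' (j : ℕ) :
    (Nat.centralBinom j : ℝ) * 4 ^ j * ∏ i ∈ range j, ((4*i+1)*(4*i+3) : ℝ) =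
      (Nat.centralBinom (2*j) : ℝ) * ∏ i ∈ range j, ((4*i+2 : ℝ))^2 := by
  induction j with
  | zero => simp [Nat.centralBinom]
  | succ j IH =>
    have h1 : ((j:ℝ) + 1) * Nat.centralBinom (j+1) = 2*(2*j+1) * Nat.centralBinom j := by
      exact_mod_cast congrArg (Nat.cast (R := ℝ)) (Nat.succ_mul_centralBinom_succ j)
    have h2 : ((2*j:ℝ) + 1) * Nat.centralBinom (2*j+1) = 2*(2*(2*j)+1) * Nat.centralBinom (2*j) := by
      exact_mod_cast congrArg (Nat.cast (R := ℝ)) (Nat.succ_mul_centralBinom_succ (2*j))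
    have h3 : ((2*j+1:ℝ) + 1) * Nat.centralBinom (2*j+1+1) = 2*(2*(2*j+1)+1) * Nat.centralBinom (2*j+1) := by
      exact_mod_cast congrArg (Nat.cast (R := ℝ)) (Nat.succ_mul_centralBinom_succ (2*j+1))
    have hkey : ((j:ℝ)+1) * ((2*j:ℝ)+1) * ((2*j:ℝ)+2) *
        ((Nat.centralBinom (j+1) : ℝ) * 4 ^ (j+1) * ∏ i ∈ range (j+1), ((4*i+1)*(4*i+3) : ℝ)) =
        ((j:ℝ)+1) * ((2*j:ℝ)+1) * ((2*j:ℝ)+2) *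
        ((Nat.centralBinom (2*(j+1)) : ℝ) * ∏ i ∈ range (j+1), ((4*i+2 : ℝ))^2) := by
      rw [prod_range_succ, prod_range_succ]
      have h2n : (2:ℕ)*(j+1) = 2*j+1+1 := by ring
      rw [h2n]
      push_cast at h1 h2 h3 IH ⊢
      linear_combination
        (4*(2*(j:ℝ)+1)*(2*j+2)*(4*j+1)*(4*j+3)*4^j*(∏ i ∈ range j, ((4*i+1)*(4*i+3) : ℝ))) * h1
        + (8*(2*(j:ℝ)+1)^2*(2*j+2)*(4*j+1)*(4*j+3)) * IH
        - (2*((j:ℝ)+1)*(4*j+2)^2*(4*j+3)*(∏ i ∈ range j, ((4*i+2:ℝ))^2)) * h2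
        - (((j:ℝ)+1)*(2*j+1)*(4*j+2)^2*(∏ i ∈ range j, ((4*i+2:ℝ))^2)) * h3
    have hpos : ((j:ℝ)+1) * ((2*j:ℝ)+1) * ((2*j:ℝ)+2) ≠ 0 := by positivity
    exact mul_left_cancel₀ hpos hkey

private lemma sum_u_le' (j : ℕ) : ∑ i ∈ range j, (((4*i+1)*(4*i+3) : ℝ))⁻¹ ≤ 2⁻¹ := by
  have key : ∀ j : ℕ, 1 ≤ j → ∑ i ∈ range j, (((4*i+1)*(4*i+3) : ℝ))⁻¹ ≤ 2⁻¹ - (16*j : ℝ)⁻¹ := by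
    intro j hj
    induction j, hj using Nat.le_induction with
    | base => norm_num
    | succ j hj IH =>
      rw [sum_range_succ]
      have hu : (((4*j+1)*(4*j+3) : ℝ))⁻¹ ≤ (16*(j:ℝ))⁻¹ - (16*((j:ℝ)+1))⁻¹ := by
        have hjp : (1:ℝ) ≤ j := by exact_mod_cast hj
        have h1 : (16*(j:ℝ))⁻¹ - (16*((j:ℝ)+1))⁻¹ = (16*j*(j+1) : ℝ)⁻¹ := by
          field_simp; ring
        rw [h1]
        apply inv_anti₀ (by positivity)
        nlinarith
      push_cast
      linarith
  rcases Nat.eq_zero_or_pos j with h | h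
  · simp [h]
  · have h2 := key j h
    have h3 : (0:ℝ) < (16*j:ℝ)⁻¹ := by positivity
    linarith

private lemma prod_ratio_le' (j : ℕ) :
    ∏ i ∈ range j, ((4*i+2 : ℝ))^2 / ((4*i+1)*(4*i+3) : ℝ) ≤ Real.exp 2⁻¹ := by
  have hle : ∏ i ∈ range j, ((4*i+2 : ℝ))^2 / ((4*i+1)*(4*i+3) : ℝ) ≤
      ∏ i ∈ range j, Real.exp ((((4*i+1)*(4*i+3) : ℝ))⁻¹) := by
    apply prod_le_prod
    · intro i _; positivity
    · intro i _
      have hD : (0:ℝ) < (4*i+1)*(4*i+3) := by positivity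
      rw [div_le_iff₀ hD]
      have h1 := Real.add_one_le_exp ((((4*i+1)*(4*i+3) : ℝ))⁻¹)
      have hexp : (((4*i+1)*(4*i+3) : ℝ))⁻¹ * ((4*i+1)*(4*i+3)) = 1 := by
        field_simp
      nlinarith [Real.exp_pos ((((4*i+1)*(4*i+3) : ℝ))⁻¹)]
  rw [← Real.exp_sum] at hle
  exact hle.trans (Real.exp_le_exp.mpr (sum_u_le' j))

private lemma even_case' (j : ℕ) :
    (Nat.centralBinom j : ℝ) * 4 ^ j ≤ Real.exp 2⁻¹ * Nat.centralBinom (2*j) := by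
  have hP : (0:ℝ) < ∏ i ∈ range j, ((4*i+1)*(4*i+3) : ℝ) := by
    apply prod_pos; intro i _; positivity
  have heq : (Nat.centralBinom j : ℝ) * 4 ^ j =
      (Nat.centralBinom (2*j) : ℝ) * ∏ i ∈ range j, ((4*i+2 : ℝ))^2 / ((4*i+1)*(4*i+3) : ℝ) := by
    rw [prod_div_distrib, ← mul_div_assoc, eq_div_iff hP.ne']
    exact prod_identity' j
  rw [heq, mul_comm (Real.exp 2⁻¹)]
  exact mul_le_mul_of_nonneg_left (prod_ratio_le' j) (Nat.cast_nonneg _)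

private lemma key_ineq' (m : ℕ) :
    ((m.choose (m/2) : ℝ)) * 2 ^ m ≤ Real.exp 2⁻¹ * ((2*m).choose m : ℝ) := by
  have hcb : ∀ k : ℕ, ((2*k).choose k : ℝ) = (Nat.centralBinom k : ℝ) := fun k => rfl
  rcases Nat.even_or_odd m with ⟨j, hj⟩ | ⟨j, hj⟩
  · have hj2 : m = 2*j := by omega
    clear hj; subst hj2
    have h2 : (2*j) / 2 = j := by omega
    have h4 : (2:ℝ) ^ (2*j) = 4 ^ j := by rw [pow_mul]; norm_num
    rw [h2, h4]
    have h5 : (2*j).choose j = Nat.centralBinom j := rfl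
    rw [h5, hcb (2*j)]
    exact even_case' j
  · subst hj
    have h2 : (2*j + 1) / 2 = j := by omega
    rw [h2]
    have e1n : (2*j+1) * (2*j).choose j = (2*j+1).choose (j+1) * (j+1) := Nat.add_one_mul_choose_eq (2*j) j
    have esymm : (2*j+1).choose (j+1) = (2*j+1).choose j := by
      have hs := Nat.choose_symm (show j+1 ≤ 2*j+1 by omega)
      rw [show 2*j+1-(j+1) = j from by omega] at hs
      exact hs.symm
    have e1 : ((2*j+1 : ℝ)) * ((2*j).choose j : ℝ) = ((2*j+1).choose j : ℝ) * (j+1) := by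
      rw [← esymm]; exact_mod_cast congrArg (Nat.cast (R := ℝ)) e1n
    have e2 : ((2*j:ℝ) + 1) * Nat.centralBinom (2*j+1) = 2*(2*(2*j)+1) * Nat.centralBinom (2*j) := by
      exact_mod_cast congrArg (Nat.cast (R := ℝ)) (Nat.succ_mul_centralBinom_succ (2*j))
    have hAe := even_case' j
    have hcbm : (2*(2*j+1)).choose (2*j+1) = Nat.centralBinom (2*j+1) := rfl
    rw [hcbm]
    have hE : (0:ℝ) < Real.exp 2⁻¹ := Real.exp_pos _
    have hcb0 : (0:ℝ) ≤ (Nat.centralBinom (2*j) : ℝ) := Nat.cast_nonneg _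
    have hmul : (0:ℝ) < ((j:ℝ)+1) * ((2*j:ℝ)+1) := by positivity
    rw [← mul_le_mul_iff_right₀ hmul]
    have hpow : (2:ℝ) ^ (2*j+1) = 2 * 4 ^ j := by
      rw [pow_succ, pow_mul]; norm_num; ring
    have hcbj : ((2*j).choose j : ℝ) = (Nat.centralBinom j : ℝ) := rfl
    rw [hcbj] at e1
    rw [hpow]
    have lhs_eq : ((j:ℝ)+1) * ((2*j:ℝ)+1) * (((2*j+1).choose j : ℝ) * (2 * 4 ^ j)) =
        2*((2*(j:ℝ)+1))^2 * ((Nat.centralBinom j : ℝ) * 4 ^ j) := by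
      linear_combination (-2*(2*(j:ℝ)+1)*4^j) * e1
    have rhs_eq : ((j:ℝ)+1) * ((2*j:ℝ)+1) * (Real.exp 2⁻¹ * (Nat.centralBinom (2*j+1) : ℝ)) =
        Real.exp 2⁻¹ * (((j:ℝ)+1) * (2*(2*(2*(j:ℝ))+1)) * (Nat.centralBinom (2*j) : ℝ)) := by
      linear_combination (Real.exp 2⁻¹ * ((j:ℝ)+1)) * e2
    rw [lhs_eq, rhs_eq]
    calc 2*((2*(j:ℝ)+1))^2 * ((Nat.centralBinom j : ℝ) * 4 ^ j)
        ≤ 2*((2*(j:ℝ)+1))^2 * (Real.exp 2⁻¹ * (Nat.centralBinom (2*j) : ℝ)) := by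
          apply mul_le_mul_of_nonneg_left hAe; positivity
      _ ≤ Real.exp 2⁻¹ * (((j:ℝ)+1) * (2*(2*(2*(j:ℝ))+1)) * (Nat.centralBinom (2*j) : ℝ)) := by
          nlinarith [mul_nonneg (mul_nonneg hE.le hcb0) (Nat.cast_nonneg (α := ℝ) j)]

private lemma sqrt_pow_aux (x : ℝ) (h : 0 ≤ x) (k : ℕ) :
    Real.sqrt (x ^ k) = (Real.sqrt x) ^ k := by
  induction k with
  | zero => simp
  | succ k IH => rw [pow_succ, pow_succ, Real.sqrt_mul (by positivity), IH]

/-- Lemma 5 of the paper: the numerical estimate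
`C(n,n/2)⁻¹ Σ_{k=0}^{n/2} C(n/2,k)² 2^{-k/2} ≤ √e · cos(π/8)^n`. -/
theorem binomial_sum_bound (n : ℕ) (hn : 2 ≤ n) (hne : Even n) :
    (n.choose (n / 2) : ℝ)⁻¹ *
      ∑ k ∈ Finset.range (n / 2 + 1),
        ((n / 2).choose k : ℝ) ^ 2 * Real.sqrt ((2 : ℝ) ^ (-(k : ℝ))) ≤
      Real.sqrt (Real.exp 1) * Real.cos (Real.pi / 8) ^ n := by
  set t : ℝ := Real.sqrt 2⁻¹ with ht
  have hmn : 2 * (n / 2) = n := Nat.mul_div_cancel' hne.two_dvd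
  set m : ℕ := n / 2 with hm
  have ht0 : 0 ≤ t := Real.sqrt_nonneg _
  -- rewrite the sqrt weights
  have hw : ∀ k : ℕ, Real.sqrt ((2 : ℝ) ^ (-(k : ℝ))) = t ^ k := by
    intro k
    have h1 : (2:ℝ) ^ (-(k:ℝ)) = ((2:ℝ)⁻¹) ^ k := by
      rw [Real.rpow_neg (by norm_num), Real.rpow_natCast, ← inv_pow]
    rw [h1, sqrt_pow_aux _ (by norm_num)]
  -- the sum bound
  have hsum : ∑ k ∈ Finset.range (m + 1), ((m.choose k : ℝ)) ^ 2 * t ^ k ≤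
      (m.choose (m / 2) : ℝ) * (t + 1) ^ m := by
    have hbt : (t + 1) ^ m = ∑ k ∈ Finset.range (m + 1),
        t ^ k * 1 ^ (m - k) * (m.choose k : ℝ) := add_pow t 1 m
    rw [hbt, mul_sum]
    apply sum_le_sum
    intro k hk
    have hle : (m.choose k : ℝ) ≤ (m.choose (m / 2) : ℝ) := by
      exact_mod_cast Nat.choose_le_middle k m
    have h0 : (0:ℝ) ≤ t ^ k := by positivity
    have h1 : (0:ℝ) ≤ (m.choose k : ℝ) := Nat.cast_nonneg _
    calc ((m.choose k : ℝ)) ^ 2 * t ^ k ≤ ((m.choose (m/2) : ℝ) * (m.choose k : ℝ)) * t ^ k := by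
          rw [sq]; apply mul_le_mul_of_nonneg_right _ h0
          exact mul_le_mul_of_nonneg_right hle h1
      _ = (m.choose (m/2) : ℝ) * (t ^ k * 1 ^ (m - k) * (m.choose k : ℝ)) := by ring
  -- the cosine
  have hsqrt2 : Real.sqrt 2 * Real.sqrt 2 = 2 := Real.mul_self_sqrt (by norm_num)
  have hsqrt2pos : 0 < Real.sqrt 2 := Real.sqrt_pos.mpr (by norm_num)
  have hcos : Real.cos (Real.pi / 8) ^ n = ((t + 1) / 2) ^ m := by
    have h1 : Real.cos (Real.pi / 8) ^ 2 = (t + 1) / 2 := by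
      rw [Real.cos_pi_div_eight, div_pow, Real.sq_sqrt (by positivity)]
      rw [ht, Real.sqrt_inv]
      rw [div_eq_div_iff (by norm_num) (by norm_num), inv_eq_one_div,
        div_add' _ _ _ hsqrt2pos.ne', div_mul_eq_mul_div, eq_div_iff hsqrt2pos.ne']
      nlinarith
    rw [← h1, ← pow_mul, ← hmn, mul_comm]
  -- final assembly
  have hEhalf : Real.sqrt (Real.exp 1) = Real.exp 2⁻¹ := by
    rw [← Real.exp_half]; norm_num
  rw [hcos, hEhalf]
  have hchoose : n.choose (n / 2) = (2 * m).choose m := by rw [← hm, hmn]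
  have hcbpos : (0:ℝ) < ((2*m).choose m : ℝ) := by
    exact_mod_cast Nat.choose_pos (by omega)
  calc (n.choose (n / 2) : ℝ)⁻¹ *
      ∑ k ∈ Finset.range (m + 1), ((m.choose k : ℝ)) ^ 2 * Real.sqrt ((2 : ℝ) ^ (-(k : ℝ)))
      = ((2*m).choose m : ℝ)⁻¹ * ∑ k ∈ Finset.range (m + 1), ((m.choose k : ℝ)) ^ 2 * t ^ k := by
        rw [hchoose]
        congr 1
        exact sum_congr rfl fun k _ => by rw [hw k]
    _ ≤ ((2*m).choose m : ℝ)⁻¹ * ((m.choose (m / 2) : ℝ) * (t + 1) ^ m) := by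
        exact mul_le_mul_of_nonneg_left hsum (by positivity)
    _ ≤ Real.exp 2⁻¹ * ((t + 1) / 2) ^ m := by
        rw [div_pow, inv_mul_le_iff₀ hcbpos]
        have h2m : (0:ℝ) < (2:ℝ) ^ m := by positivity
        have hstep := mul_le_mul_of_nonneg_right (key_ineq' m)
          (le_of_lt (by positivity : (0:ℝ) < (t+1)^m / 2^m))
        calc (m.choose (m / 2) : ℝ) * (t + 1) ^ m
            = ((m.choose (m/2) : ℝ) * 2 ^ m) * ((t+1)^m / 2^m) := by
              field_simp
          _ ≤ (Real.exp 2⁻¹ * ((2*m).choose m : ℝ)) * ((t+1)^m / 2^m) := hstep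
          _ = ((2*m).choose m : ℝ) * (Real.exp 2⁻¹ * ((t+1)^m / 2^m)) := by ring
end

section
/- For every even integer n ≥ 2 and every natural number k with 0 ≤ k ≤ n/2, the inequality binomial(n/2, k) · 2^{n/2} ≤ √e · binomial(n, n/2) holds, where e is Euler's number and the inequality is between real numbers. -/
open Stirling Real

private lemma sqrtPi_le (n : ℕ) (hn : 1 ≤ n) : √π ≤ stirlingSeq n := by
  obtain ⟨m, rfl⟩ := Nat.exists_eq_add_of_le hn
  simpa [Function.comp, Nat.succ_eq_add_one, Nat.add_comm] using
    stirlingSeq'_antitone.le_of_tendsto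
    (tendsto_stirlingSeq_sqrt_pi.comp (Filter.tendsto_add_atTop_nat 1)) m

private lemma s_le_s (a b : ℕ) (ha : 1 ≤ a) (hab : a ≤ b) : stirlingSeq b ≤ stirlingSeq a := by
  obtain ⟨a', rfl⟩ := Nat.exists_eq_add_of_le ha
  obtain ⟨b', rfl⟩ := Nat.exists_eq_add_of_le hab
  simpa [Function.comp, Nat.succ_eq_add_one, Nat.add_comm, Nat.add_assoc, Nat.add_left_comm] using
    stirlingSeq'_antitone (by omega : a' ≤ a' + b')

private lemma s_le_one (n : ℕ) (hn : 1 ≤ n) : stirlingSeq n ≤ Real.exp 1 / √2 := by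
  simpa [stirlingSeq_one] using s_le_s 1 n le_rfl hn

private lemma s_pos (n : ℕ) (hn : 1 ≤ n) : 0 < stirlingSeq n := by
  obtain ⟨m, rfl⟩ := Nat.exists_eq_add_of_le hn
  simpa [Nat.add_comm] using stirlingSeq'_pos m

private lemma fact_eq (j : ℕ) (hj : 1 ≤ j) :
    (j.factorial : ℝ) = stirlingSeq j * (√(2*j) * ((j:ℝ)/Real.exp 1)^j) := by
  have h0 : (0:ℝ) < j := by exact_mod_cast hj
  have hd : √(2*(j:ℝ)) * ((j:ℝ)/Real.exp 1)^j ≠ 0 := by positivity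
  rw [stirlingSeq, div_mul_cancel₀ _ hd]

private lemma cb_key (n : ℕ) (hn : 1 ≤ n) :
    (((2*n).choose n) : ℝ) * ((stirlingSeq n)^2 * √(n:ℝ)) = stirlingSeq (2*n) * 4^n := by
  have h0 : (0:ℝ) < n := by exact_mod_cast hn
  set A := ((n:ℝ)/Real.exp 1)^n with hAdef
  have hA : (0:ℝ) < A := by rw [hAdef]; positivity
  have h1 := fact_eq n hn
  have h2 := fact_eq (2*n) (by omega)
  have h3nat := Nat.choose_mul_factorial_mul_factorial (show n ≤ 2*n by omega)
  rw [show 2*n-n = n by omega] at h3nat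
  have h3 : (((2*n).choose n) : ℝ) * ((n.factorial:ℝ) * (n.factorial:ℝ))
      = ((2*n).factorial : ℝ) := by
    rw [← mul_assoc]; exact_mod_cast congrArg (Nat.cast (R := ℝ)) h3nat
  have h4 : √(2*(n:ℝ)) = √2 * √(n:ℝ) := Real.sqrt_mul (by norm_num) _
  have h5 : √(2*((2*n : ℕ):ℝ)) = 2 * √(n:ℝ) := by
    push_cast
    rw [show (2:ℝ)*(2*(n:ℝ)) = 4 * n by ring, Real.sqrt_mul (by norm_num),
      show (4:ℝ) = 2^2 by norm_num, Real.sqrt_sq (by norm_num)]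
  have h6 : (((2*n:ℕ):ℝ)/Real.exp 1)^(2*n) = 4^n * (A*A) := by
    push_cast
    rw [show (2*(n:ℝ))/Real.exp 1 = 2 * ((n:ℝ)/Real.exp 1) by ring, mul_pow, pow_mul,
      two_mul n, pow_add, hAdef]
    norm_num
  rw [h1, h2, h4, h5, h6] at h3
  have hne : (2:ℝ) * √(n:ℝ) * (A*A) ≠ 0 := by positivity
  apply mul_right_cancel₀ hne
  have h22 : √(2:ℝ) * √2 = 2 := Real.mul_self_sqrt (by norm_num)
  linear_combination h3 - ((((2*n).choose n) : ℝ) * stirlingSeq n^2 * A * A * √(n:ℝ) * √(n:ℝ)) * h22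

private lemma cb_le (u v : ℕ) (hu : 1 ≤ u) (huv : u ≤ v) (hv2 : v ≤ 2*u) :
    (((2*u).choose u : ℝ)) * 4^(v-u) ≤ √(Real.exp 1) * ((2*v).choose v : ℝ) := by
  have hv1 : 1 ≤ v := le_trans hu huv
  have hu0 : (0:ℝ) < u := by exact_mod_cast hu
  have hv0 : (0:ℝ) < v := by exact_mod_cast hv1
  have hKu := cb_key u hu
  have hKv := cb_key v hv1
  have hsu := s_pos u hu
  have hsv := s_pos v hv1
  have core : stirlingSeq (2*u) * stirlingSeq v^2 * √(v:ℝ) ≤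
      √(Real.exp 1) * stirlingSeq u^2 * stirlingSeq (2*v) * √(u:ℝ) := by
    have c1 : stirlingSeq (2*u) ≤ Real.exp 1/√2 := s_le_one _ (by omega)
    have c2 : stirlingSeq v ≤ stirlingSeq u := s_le_s u v hu huv
    have c3 : √(v:ℝ) ≤ √2 * √(u:ℝ) := by
      rw [← Real.sqrt_mul (by norm_num)]
      exact Real.sqrt_le_sqrt (by exact_mod_cast hv2)
    have c4 : √π ≤ stirlingSeq (2*v) := sqrtPi_le _ (by omega)
    have c5 : Real.exp 1 ≤ √(Real.exp 1) * √π := by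
      have he : Real.exp 1 ≤ π := by
        nlinarith [Real.exp_one_lt_d9, Real.pi_gt_d6]
      calc Real.exp 1 = √(Real.exp 1) * √(Real.exp 1) :=
            (Real.mul_self_sqrt (Real.exp_pos 1).le).symm
        _ ≤ √(Real.exp 1) * √π :=
            mul_le_mul_of_nonneg_left (Real.sqrt_le_sqrt he) (Real.sqrt_nonneg _)
    calc stirlingSeq (2*u) * stirlingSeq v^2 * √(v:ℝ)
        ≤ (Real.exp 1/√2) * stirlingSeq u^2 * (√2*√(u:ℝ)) := by
          gcongr
      _ = Real.exp 1 * stirlingSeq u^2 * √(u:ℝ) := by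
          have h2 : √(2:ℝ) ≠ 0 := by positivity
          field_simp
      _ ≤ (√(Real.exp 1) * √π) * stirlingSeq u^2 * √(u:ℝ) := by gcongr
      _ = √(Real.exp 1) * stirlingSeq u^2 * √π * √(u:ℝ) := by ring
      _ ≤ √(Real.exp 1) * stirlingSeq u^2 * stirlingSeq (2*v) * √(u:ℝ) := by gcongr
  have hP : (0:ℝ) < (stirlingSeq u^2 * √(u:ℝ)) * (stirlingSeq v^2 * √(v:ℝ)) := by positivity
  apply le_of_mul_le_mul_right _ hP
  have h4 : (4:ℝ)^u * 4^(v-u) = 4^v := by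
    rw [← pow_add]; congr 1; omega
  calc ((2*u).choose u : ℝ) * 4^(v-u) * ((stirlingSeq u^2 * √(u:ℝ)) * (stirlingSeq v^2 * √(v:ℝ)))
      = (stirlingSeq (2*u) * stirlingSeq v^2 * √(v:ℝ)) * 4^v := by
        linear_combination (((4:ℝ)^(v-u)) * (stirlingSeq v^2 * √(v:ℝ))) * hKu
          + (stirlingSeq (2*u) * stirlingSeq v^2 * √(v:ℝ)) * h4
    _ ≤ (√(Real.exp 1) * stirlingSeq u^2 * stirlingSeq (2*v) * √(u:ℝ)) * 4^v :=
        mul_le_mul_of_nonneg_right core (by positivity)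
    _ = √(Real.exp 1) * ((2*v).choose v : ℝ) * ((stirlingSeq u^2 * √(u:ℝ)) * (stirlingSeq v^2 * √(v:ℝ))) := by
        linear_combination (-(√(Real.exp 1) * stirlingSeq u^2 * √(u:ℝ))) * hKv

/-- The intermediate estimate in the proof of Lemma 5 of the paper:
`C(n/2, k) · 2^{n/2} ≤ √e · C(n, n/2)` for every `k ≤ n/2`. -/
theorem central_binomial_estimate (n : ℕ) (hn : 2 ≤ n) (hne : Even n) (k : ℕ) (hk : k ≤ n / 2) :
    ((n / 2).choose k : ℝ) * 2 ^ (n / 2) ≤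
      Real.sqrt (Real.exp 1) * (n.choose (n / 2) : ℝ) := by
  obtain ⟨m, hm⟩ := hne
  have hm2 : n = 2*m := by omega
  subst hm2
  have hd : 2*m/2 = m := by omega
  rw [hd]
  have hm1 : 1 ≤ m := by omega
  have hmid : (m.choose k : ℝ) ≤ m.choose (m/2) := by
    exact_mod_cast Nat.choose_le_middle k m
  refine le_trans (mul_le_mul_of_nonneg_right hmid (by positivity)) ?_
  rcases Nat.even_or_odd m with ⟨t,ht⟩ | ⟨t,ht⟩
  · -- m = 2*t
    have ht2 : m = 2*t := by omega
    subst ht2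
    have ht1 : 1 ≤ t := by omega
    have hd2 : 2*t/2 = t := by omega
    rw [hd2]
    have := cb_le t (2*t) ht1 (by omega) (by omega)
    rw [show 2*t - t = t by omega] at this
    have hp : (2:ℝ)^(2*t) = 4^t := by
      rw [pow_mul]; norm_num
    rw [hp]
    exact this
  · -- m = 2*t+1
    have ht2 : m = 2*t+1 := by omega
    subst ht2
    have hd2 : (2*t+1)/2 = t := by omega
    rw [hd2]
    have hsymm : (2*t+1).choose (t+1) = (2*t+1).choose t := by
      rw [← Nat.choose_symm (by omega : t+1 ≤ 2*t+1), show (2*t+1)-(t+1) = t by omega]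
    have hcc : (2*(t+1)).choose (t+1) = 2 * ((2*t+1).choose t) := by
      rw [show 2*(t+1) = (2*t+1)+1 by ring, Nat.choose_succ_succ, hsymm]; omega
    have hccR : ((2*(t+1)).choose (t+1) : ℝ) = 2 * ((2*t+1).choose t : ℝ) := by
      exact_mod_cast hcc
    have := cb_le (t+1) (2*t+1) (by omega) (by omega) (by omega)
    rw [show (2*t+1) - (t+1) = t by omega] at this
    have hp : (2:ℝ)^(2*t+1) = 2 * 4^t := by
      rw [pow_succ, pow_mul]; ring_nf
    rw [hp]
    calc ((2*t+1).choose t : ℝ) * (2 * 4^t)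
        = ((2*(t+1)).choose (t+1) : ℝ) * 4^t := by rw [hccR]; ring
      _ ≤ √(Real.exp 1) * ((2*(2*t+1)).choose (2*t+1) : ℝ) := this
end
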